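/- arXiv:1409.6828 — 2 statements merged into one kernel-verified Lean document; each statement's English description precedes it below -/
import Mathlib

section
/- Let G be a connected simple graph on N ≥ 2 vertices with biased random walk matrix P^B, let (h_v) be a family of hitting-time solutions, and let t be a hidden vertex. Define the potential function φ(x,y) = h_y(x) + h_t(y) − h_y(t). Then any meeting-time solution m' for the modified paired process X' satisfies m'(x,y) ≤ φ(x,y) for all vertices x, y. -/
/-!
Since `P^B` is symmetric and stochastic, Green's identity
`⟨h_a, (I - P) h_b⟩ = ⟨h_b, (I - P) h_a⟩` together with `(I - P) h_b = 1 - N δ_b` gives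
`N (h_a(b) - h_b(a)) = ∑ h_a - ∑ h_b`. This makes the potential `φ` symmetric, so `φ` solves the
hitting equation in each variable and the generator of the paired process sends it to `-2` off
the diagonal, while it sends `m'` to `-1`. By the maximum principle, `m' - φ` attains its
maximum on the diagonal, where it equals `h_t(y) - h_y(t) ≤ 0` because `t` is hidden.
-/

noncomputable def PB {N : ℕ} (G : SimpleGraph (Fin N)) [DecidableRel G.Adj]
    (i j : Fin N) : ℝ :=
  if i = j then
    1 - 1 / (N : ℝ) - ∑ k ∈ G.neighborFinset i, 1 / ((N : ℝ) * (G.degree k : ℝ))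
  else if G.Adj i j then
    (1 / (N : ℝ)) * (1 / (G.degree i : ℝ) + 1 / (G.degree j : ℝ))
  else 0

open Finset Matrix

section HittingTime

variable {V : Type*} [Fintype V] {P : Matrix V V ℝ}

def IsHittingTimeSolution (P : Matrix V V ℝ) (y : V) (f : V → ℝ) : Prop :=
  f y = 0 ∧ ∀ x, x ≠ y → f x = 1 + (P *ᵥ f) x

theorem sum_sub_mulVec_eq_zero (hcol : ∀ z, ∑ x, P x z = 1) (f : V → ℝ) :
    ∑ x, (f - P *ᵥ f) x = 0 := by
  simp only [Pi.sub_apply, sum_sub_distrib, mulVec, dotProduct]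
  rw [sum_comm]
  simp [← sum_mul, hcol]

theorem IsHittingTimeSolution.sub_mulVec [DecidableEq V] {y : V} {f : V → ℝ}
    (hcol : ∀ z, ∑ x, P x z = 1) (hf : IsHittingTimeSolution P y f) :
    f - P *ᵥ f = 1 - Pi.single y (Fintype.card V : ℝ) := by
  have hoff : ∀ z, z ≠ y → (f - P *ᵥ f) z = 1 := fun z hz => by
    rw [Pi.sub_apply, hf.2 z hz]; ring
  ext z
  rcases eq_or_ne z y with rfl | hz
  · have hsum := sum_sub_mulVec_eq_zero hcol f
    rw [← add_sum_erase _ _ (mem_univ z),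
      sum_congr rfl fun x hx => hoff x (ne_of_mem_erase hx)] at hsum
    simp only [sum_const, card_erase_of_mem (mem_univ z), card_univ, nsmul_eq_mul, mul_one] at hsum
    rw [Nat.cast_pred (Fintype.card_pos_iff.mpr ⟨z⟩)] at hsum
    simp only [Pi.sub_apply, Pi.one_apply, Pi.single_eq_same] at hsum ⊢
    linarith
  · simp [hoff z hz, hz]

theorem IsHittingTimeSolution.card_mul_sub_eq (hP : Pᵀ = P) (hrow : ∀ x, ∑ z, P x z = 1)
    {a b : V} {f g : V → ℝ}
    (hf : IsHittingTimeSolution P a f) (hg : IsHittingTimeSolution P b g) :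
    Fintype.card V * (f b - g a) = ∑ x, f x - ∑ x, g x := by
  classical
  have hcol : ∀ z, ∑ x, P x z = 1 := fun z => by
    rw [← hrow z]; exact sum_congr rfl fun x _ => congrFun (congrFun hP z) x
  have green : f ⬝ᵥ (g - P *ᵥ g) = g ⬝ᵥ (f - P *ᵥ f) := by
    rw [dotProduct_sub, dotProduct_sub, dotProduct_mulVec, ← mulVec_transpose, hP,
      dotProduct_comm f g, dotProduct_comm (P *ᵥ f) g]
  rw [hg.sub_mulVec hcol, hf.sub_mulVec hcol] at green
  simp only [dotProduct_sub, dotProduct_one, dotProduct_single] at green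
  linarith

theorem IsHittingTimeSolution.sum_mul_sub_eq_neg_one (hrow : ∀ x, ∑ z, P x z = 1)
    {x y : V} {f : V → ℝ} (hf : IsHittingTimeSolution P y f) (hx : x ≠ y) :
    ∑ i, P x i * (f i - f x) = -1 := by
  have hrec : f x = 1 + ∑ i, P x i * f i := hf.2 x hx
  simp only [mul_sub, sum_sub_distrib, ← sum_mul, hrow, one_mul]
  linarith

def hittingPotential (h : V → V → ℝ) (t x y : V) : ℝ := h y x + h t y - h y t

theorem hittingPotential_comm (hP : Pᵀ = P) (hrow : ∀ x, ∑ z, P x z = 1) {h : V → V → ℝ}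
    (hh : ∀ v, IsHittingTimeSolution P v (h v)) (t x y : V) :
    hittingPotential h t x y = hittingPotential h t y x := by
  have hN : (Fintype.card V : ℝ) ≠ 0 := by
    exact_mod_cast (Fintype.card_pos_iff.mpr ⟨t⟩).ne'
  have hyx := (hh y).card_mul_sub_eq hP hrow (hh x)
  have hty := (hh t).card_mul_sub_eq hP hrow (hh y)
  have htx := (hh t).card_mul_sub_eq hP hrow (hh x)
  refine mul_left_cancel₀ hN ?_
  unfold hittingPotential
  linear_combination hyx + hty - htx

/-- The generator of the paired process `X'`: the meeting-time equation says that it sends `m'`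
to `-1` off the diagonal. -/
def pairDrift (P : Matrix V V ℝ) (u : V → V → ℝ) (x y : V) : ℝ :=
  ∑ i, P x i * (u i y - u x y) + ∑ j, P y j * (u x j - u x y)

theorem pairDrift_hittingPotential (hP : Pᵀ = P) (hrow : ∀ x, ∑ z, P x z = 1)
    {h : V → V → ℝ} (hh : ∀ v, IsHittingTimeSolution P v (h v)) (t : V) {x y : V}
    (hxy : x ≠ y) : pairDrift P (hittingPotential h t) x y = -2 := by
  have hφ := hittingPotential_comm hP hrow hh t
  have hleft : ∀ i, hittingPotential h t i y - hittingPotential h t x y = h y i - h y x :=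
    fun i => by unfold hittingPotential; ring
  have hright : ∀ j, hittingPotential h t x j - hittingPotential h t x y = h x j - h x y :=
    fun j => by rw [hφ x j, hφ x y]; unfold hittingPotential; ring
  simp only [pairDrift, hleft, hright, (hh y).sum_mul_sub_eq_neg_one hrow hxy,
    (hh x).sum_mul_sub_eq_neg_one hrow hxy.symm]
  norm_num

theorem pairDrift_le_of_forall_sub_le (hP : ∀ x z, x ≠ z → 0 ≤ P x z)
    {u w : V → V → ℝ} {x y : V} (hmax : ∀ a b, u a b - w a b ≤ u x y - w x y) :
    pairDrift P u x y ≤ pairDrift P w x y := by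
  have hterm : ∀ (c : V) (d : V → ℝ) (e : V → ℝ), (∀ k, d k - d c ≤ e k - e c) →
      ∑ k, P c k * (d k - d c) ≤ ∑ k, P c k * (e k - e c) := by
    intro c d e hde
    refine sum_le_sum fun k _ => ?_
    rcases eq_or_ne c k with rfl | hck
    · simp
    · exact mul_le_mul_of_nonneg_left (hde k) (hP c k hck)
  exact add_le_add (hterm x (u · y) (w · y) fun a => by linarith [hmax a y])
    (hterm y (u x ·) (w x ·) fun b => by linarith [hmax x b])

theorem le_of_pairDrift_lt (hP : ∀ x z, x ≠ z → 0 ≤ P x z) {u w : V → V → ℝ}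
    (hlt : ∀ x y, x ≠ y → pairDrift P w x y < pairDrift P u x y)
    (hdiag : ∀ x, u x x ≤ w x x) (x y : V) : u x y ≤ w x y := by
  have : Nonempty (V × V) := ⟨(x, y)⟩
  obtain ⟨⟨a, b⟩, hmax⟩ := Finite.exists_max fun q : V × V => u q.1 q.2 - w q.1 q.2
  rcases eq_or_ne a b with rfl | hab
  · linarith [hmax (x, y), hdiag a]
  · exact absurd (pairDrift_le_of_forall_sub_le hP fun c d => hmax (c, d)) (hlt a b hab).not_ge

end HittingTime

section BiasedWalk

variable {N : ℕ} (G : SimpleGraph (Fin N)) [DecidableRel G.Adj]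

theorem PB_transpose : (PB G)ᵀ = PB G := by
  ext i j
  change PB G j i = PB G i j
  rcases eq_or_ne i j with rfl | hij
  · rfl
  · rw [PB, PB, if_neg hij.symm, if_neg hij]
    by_cases hadj : G.Adj i j
    · rw [if_pos hadj.symm, if_pos hadj, add_comm]
    · rw [if_neg (mt G.adj_symm hadj), if_neg hadj]

theorem PB_nonneg_of_ne {i j : Fin N} (hij : i ≠ j) : 0 ≤ PB G i j := by
  simp only [PB, if_neg hij]
  split_ifs <;> positivity

theorem PB_eq_zero {i j : Fin N} (hij : i ≠ j) (hadj : ¬G.Adj i j) : PB G i j = 0 := by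
  simp [PB, hij, hadj]

theorem sum_neighborFinset_PB_mul {x : Fin N} {g : Fin N → ℝ} (hg : g x = 0) :
    ∑ i ∈ G.neighborFinset x, PB G x i * g i = ∑ i, PB G x i * g i := by
  refine sum_subset (subset_univ _) fun i _ hi => ?_
  rcases eq_or_ne x i with rfl | hxi
  · rw [hg, mul_zero]
  · rw [PB_eq_zero G hxi (by simpa using hi), zero_mul]

theorem PB_of_adj {i j : Fin N} (hadj : G.Adj i j) :
    PB G i j = 1 / (N : ℝ) * (1 / (G.degree i : ℝ) + 1 / (G.degree j : ℝ)) := by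
  simp [PB, hadj.ne, hadj]

theorem sum_PB_eq_one {x : Fin N} (hx : 0 < G.degree x) : ∑ z, PB G x z = 1 := by
  have hsupp : ∑ z ∈ insert x (G.neighborFinset x), PB G x z = ∑ z, PB G x z :=
    sum_subset (subset_univ _) fun z _ hz => PB_eq_zero G (fun h => hz (h ▸ mem_insert_self _ _))
      fun h => hz (mem_insert_of_mem ((G.mem_neighborFinset x z).mpr h))
  have hnbr : ∑ i ∈ G.neighborFinset x, PB G x i
      = ∑ i ∈ G.neighborFinset x,
          (1 / ((N : ℝ) * G.degree x) + 1 / ((N : ℝ) * G.degree i)) :=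
    sum_congr rfl fun i hi => by
      rw [PB_of_adj G ((G.mem_neighborFinset x i).mp hi)]; ring
  have hdeg : (G.degree x : ℝ) ≠ 0 := by positivity
  rw [← hsupp, sum_insert (G.notMem_neighborFinset_self x), hnbr, sum_add_distrib, sum_const,
    G.card_neighborFinset_eq_degree, nsmul_eq_mul, PB, if_pos rfl]
  field_simp
  ring

end BiasedWalk

theorem meeting_time_modified_le_potential_general {N : ℕ} (hN : 2 ≤ N)
    (G : SimpleGraph (Fin N)) [DecidableRel G.Adj] (hconn : G.Connected)
    (h : Fin N → Fin N → ℝ) (h0 : ∀ v, h v v = 0)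
    (hrec : ∀ v x, x ≠ v → h v x = 1 + ∑ z, PB G x z * h v z)
    (t : Fin N) (ht : ∀ v, h v t ≤ h t v)
    (m' : Fin N → Fin N → ℝ)
    (hdiag : ∀ x, m' x x = 0)
    (hm : ∀ x y, x ≠ y →
      ((∑ i ∈ G.neighborFinset x, PB G x i) + (∑ j ∈ G.neighborFinset y, PB G y j))
          * m' x y
        = 1 + (∑ i ∈ G.neighborFinset x, PB G x i * m' i y)
            + (∑ j ∈ G.neighborFinset y, PB G y j * m' x j)) :
    ∀ x y, m' x y ≤ h y x + h t y - h y t := by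
  have : Nontrivial (Fin N) := Fin.nontrivial_iff_two_le.mpr hN
  have hrow : ∀ x, ∑ z, PB G x z = 1 := fun x =>
    sum_PB_eq_one G (hconn.preconnected.degree_pos_of_nontrivial x)
  have hh : ∀ v, IsHittingTimeSolution (PB G) v (h v) := fun v => ⟨h0 v, hrec v⟩
  have hdrift : ∀ x y, x ≠ y → pairDrift (PB G) m' x y = -1 := fun x y hxy => by
    unfold pairDrift
    rw [← sum_neighborFinset_PB_mul G (g := (m' · y - m' x y)) (sub_self _),
      ← sum_neighborFinset_PB_mul G (g := (m' x · - m' x y)) (sub_self _)]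
    simp only [mul_sub, sum_sub_distrib, ← sum_mul]
    linarith [hm x y hxy]
  refine le_of_pairDrift_lt (w := hittingPotential h t) (fun _ _ => PB_nonneg_of_ne G)
    (fun x y hxy => ?_) (fun x => ?_)
  · rw [hdrift x y hxy, pairDrift_hittingPotential (PB_transpose G) hrow hh t hxy]
    norm_num
  · simp only [hittingPotential, hdiag, h0]
    linarith [ht x]

/-- let `h` be a family of hitting-time solutions of the biased random walk
(`h v u = H(u, v)`), let `t` be a hidden vertex, and let
`φ(x,y) = h_y(x) + h_t(y) − h_y(t)`. Then any meeting-time solution `m'` for the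
modified paired process `X'` satisfies `m' x y ≤ φ(x,y)` for all vertices `x, y`. -/
theorem meeting_time_modified_le_potential {N : ℕ} (hN : 2 ≤ N)
    (G : SimpleGraph (Fin N)) [DecidableRel G.Adj] (hconn : G.Connected)
    (h : Fin N → Fin N → ℝ) (h0 : ∀ v, h v v = 0)
    (hrec : ∀ v x, x ≠ v → h v x = 1 + ∑ z, PB G x z * h v z)
    (t : Fin N) (ht : ∀ v, h v t ≤ h t v)
    (m' : Fin N → Fin N → ℝ)
    (hsym : ∀ x y, m' x y = m' y x) (hdiag : ∀ x, m' x x = 0)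
    (hm : ∀ x y, x ≠ y →
      ((∑ i ∈ G.neighborFinset x, PB G x i) + (∑ j ∈ G.neighborFinset y, PB G y j))
          * m' x y
        = 1 + (∑ i ∈ G.neighborFinset x, PB G x i * m' i y)
            + (∑ j ∈ G.neighborFinset y, PB G y j * m' x j)) :
    ∀ x y, m' x y ≤ h y x + h t y - h y t :=
  meeting_time_modified_le_potential_general hN G hconn h h0 hrec t ht m' hdiag hm
end

section
/- (Claim 2 in the proof of Lemma 4) Let G be a connected simple graph on N ≥ 2 vertices with biased random walk matrix P^B. If m is a meeting-time solution for the paired process X and m' is a meeting-time solution for the modified paired process X', then max_{x,y} m(x,y) ≤ 2 · max_{x,y} m'(x,y); that is, the meeting time of X is at most twice the meeting time of X'. -/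
namespace SimpleGraph

variable {V : Type*} {G : SimpleGraph V}

lemma exists_adj_dist_lt {u v : V} (h : G.dist u v ≠ 0) :
    ∃ w, G.Adj u w ∧ G.dist w v < G.dist u v := by
  obtain ⟨p, hp⟩ := exists_walk_of_dist_ne_zero h
  cases p with
  | nil => simp at h
  | cons hadj q =>
    refine ⟨_, hadj, ?_⟩
    have := dist_le q
    simp only [Walk.length_cons] at hp
    omega

end SimpleGraph

section BiasedWalk

open Finset

variable {N : ℕ} {G : SimpleGraph (Fin N)} [DecidableRel G.Adj]

lemma PB_pos_of_adj {a b : Fin N} (h : G.Adj a b) : 0 < PB G a b := by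
  have hN : (0 : ℝ) < N := by exact_mod_cast a.pos
  have ha : (0 : ℝ) < G.degree a := by
    exact_mod_cast G.degree_pos_iff_exists_adj a |>.2 ⟨b, h⟩
  have hb : (0 : ℝ) < G.degree b := by
    exact_mod_cast G.degree_pos_iff_exists_adj b |>.2 ⟨a, h.symm⟩
  rw [PB, if_neg h.ne, if_pos h]
  positivity

lemma PB_comm (a b : Fin N) : PB G a b = PB G b a := by
  by_cases hab : a = b
  · rw [hab]
  by_cases h : G.Adj a b
  · rw [PB, PB, if_neg hab, if_neg (Ne.symm hab), if_pos h, if_pos h.symm, add_comm]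
  · rw [PB, PB, if_neg hab, if_neg (Ne.symm hab), if_neg h, if_neg (mt G.adj_symm h)]

lemma PB_eq_zero_of_not_adj {a b : Fin N} (hab : a ≠ b) (h : ¬G.Adj a b) : PB G a b = 0 := by
  rw [PB, if_neg hab, if_neg h]

lemma sum_PB_mul_sub_nonpos (a : Fin N) {g : Fin N → ℝ} {U : ℝ} (hg : ∀ i, g i ≤ U) :
    ∑ i ∈ G.neighborFinset a, PB G a i * (g i - U) ≤ 0 :=
  sum_nonpos fun i hi ↦
    mul_nonpos_of_nonneg_of_nonpos (PB_pos_of_adj ((G.mem_neighborFinset a i).1 hi)).le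
      (sub_nonpos.2 (hg i))

lemma sum_PB_mul_sub_le_of_adj {a b : Fin N} (hab : G.Adj a b) {g : Fin N → ℝ} {U : ℝ}
    (hg : ∀ i, g i ≤ U) :
    ∑ i ∈ G.neighborFinset a, PB G a i * (g i - U) ≤ PB G a b * (g b - U) := by
  rw [← sum_erase_add _ _ ((G.mem_neighborFinset a b).2 hab)]
  have : ∑ i ∈ (G.neighborFinset a).erase b, PB G a i * (g i - U) ≤ 0 :=
    sum_nonpos fun i hi ↦ mul_nonpos_of_nonneg_of_nonpos
      (PB_pos_of_adj ((G.mem_neighborFinset a i).1 (mem_of_mem_erase hi))).le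
      (sub_nonpos.2 (hg i))
  linarith

/-- Generator of the modified paired process `X'`: either walker takes a `P^B`-step. -/
noncomputable def pairGenerator (G : SimpleGraph (Fin N)) [DecidableRel G.Adj]
    (f : Fin N → Fin N → ℝ) (a b : Fin N) : ℝ :=
  ∑ i ∈ G.neighborFinset a, PB G a i * (f i b - f a b) +
    ∑ j ∈ G.neighborFinset b, PB G b j * (f a j - f a b)

lemma pairGenerator_sub (f g : Fin N → Fin N → ℝ) (a b : Fin N) :
    pairGenerator G (f - g) a b = pairGenerator G f a b - pairGenerator G g a b := by
  simp only [pairGenerator, Pi.sub_apply, mul_sub, sum_sub_distrib]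
  ring

lemma pairGenerator_eq_of_paired {m : Fin N → Fin N → ℝ} (hdiag : ∀ x, m x x = 0)
    (hm : ∀ x y, x ≠ y →
      ((∑ i ∈ G.neighborFinset x, PB G x i) + (∑ j ∈ G.neighborFinset y, PB G y j)
          - PB G x y) * m x y
        = 1 + (∑ i ∈ (G.neighborFinset x).erase y, PB G x i * m i y)
            + (∑ j ∈ (G.neighborFinset y).erase x, PB G y j * m x j))
    {a b : Fin N} (hab : a ≠ b) :
    pairGenerator G m a b = -1 - PB G a b * m a b := by
  have h := hm a b hab
  rw [sum_erase _ (by rw [hdiag, mul_zero]), sum_erase _ (by rw [hdiag, mul_zero])] at h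
  simp only [pairGenerator, mul_sub, sum_sub_distrib, ← sum_mul]
  linear_combination -h

lemma pairGenerator_eq_of_modified {m' : Fin N → Fin N → ℝ}
    (hm : ∀ x y, x ≠ y →
      ((∑ i ∈ G.neighborFinset x, PB G x i) + (∑ j ∈ G.neighborFinset y, PB G y j))
          * m' x y
        = 1 + (∑ i ∈ G.neighborFinset x, PB G x i * m' i y)
            + (∑ j ∈ G.neighborFinset y, PB G y j * m' x j))
    {a b : Fin N} (hab : a ≠ b) :
    pairGenerator G m' a b = -1 := by
  simp only [pairGenerator, mul_sub, sum_sub_distrib, ← sum_mul]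
  linear_combination -hm a b hab

lemma pairGenerator_le_of_isMax_of_adj {f : Fin N → Fin N → ℝ} {a b : Fin N}
    (hmax : ∀ x y, f x y ≤ f a b) (hab : G.Adj a b) :
    pairGenerator G f a b ≤ PB G a b * (f b b + f a a - 2 * f a b) := by
  have ha := sum_PB_mul_sub_le_of_adj hab fun i ↦ hmax i b
  have hb := sum_PB_mul_sub_le_of_adj hab.symm fun j ↦ hmax a j
  rw [PB_comm b a] at hb
  rw [pairGenerator]
  linarith

lemma le_of_isMax_of_pairGenerator_eq_zero {f : Fin N → Fin N → ℝ} {a b c : Fin N}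
    (hmax : ∀ x y, f x y ≤ f a b) (hf : pairGenerator G f a b = 0) (hac : G.Adj a c) :
    f a b ≤ f c b := by
  have ha := sum_PB_mul_sub_le_of_adj hac fun i ↦ hmax i b
  have hb := sum_PB_mul_sub_nonpos (G := G) b fun j ↦ hmax a j
  rw [pairGenerator] at hf
  have : 0 ≤ PB G a c * (f c b - f a b) := by linarith
  exact sub_nonneg.1 ((mul_nonneg_iff_of_pos_left (PB_pos_of_adj hac)).1 this)

lemma exists_le_of_isMax {m m' : Fin N → Fin N → ℝ} (hconn : G.Connected)
    (hdiag : ∀ x, m x x = 0) (hdiag' : ∀ x, m' x x = 0)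
    (hL : ∀ a b, a ≠ b → pairGenerator G (m - m') a b = -(PB G a b * m a b))
    {a b : Fin N} (hmax : ∀ x y, (m - m') x y ≤ (m - m') a b) :
    ∃ x y, (m - m') a b ≤ m' x y := by
  induction hn : G.dist a b using Nat.strong_induction_on generalizing a with
  | _ n ih =>
  by_cases hab : a = b
  · subst hab
    exact ⟨a, a, by simp [hdiag, hdiag']⟩
  by_cases hadj : G.Adj a b
  · have h := pairGenerator_le_of_isMax_of_adj hmax hadj
    have hP := PB_pos_of_adj hadj
    simp only [hL a b hab, Pi.sub_apply, hdiag, hdiag'] at h ⊢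
    exact ⟨a, b, by nlinarith⟩
  · obtain ⟨c, hac, hlt⟩ := SimpleGraph.exists_adj_dist_lt
      (SimpleGraph.dist_ne_zero_iff_ne_and_reachable.2 ⟨hab, hconn.preconnected a b⟩)
    have hc := le_of_isMax_of_pairGenerator_eq_zero hmax
      (by rw [hL a b hab, PB_eq_zero_of_not_adj hab hadj, zero_mul, neg_zero]) hac
    obtain ⟨x, y, h⟩ := ih _ (hn ▸ hlt) (fun x y ↦ (hmax x y).trans hc) rfl
    exact ⟨x, y, hc.trans h⟩

end BiasedWalk

theorem meeting_time_le_two_modified_general {N : ℕ}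
    (G : SimpleGraph (Fin N)) [DecidableRel G.Adj] (hconn : G.Connected)
    (m : Fin N → Fin N → ℝ)
    (hdiagX : ∀ x, m x x = 0)
    (hmX : ∀ x y, x ≠ y →
      ((∑ i ∈ G.neighborFinset x, PB G x i) + (∑ j ∈ G.neighborFinset y, PB G y j)
          - PB G x y) * m x y
        = 1 + (∑ i ∈ (G.neighborFinset x).erase y, PB G x i * m i y)
            + (∑ j ∈ (G.neighborFinset y).erase x, PB G y j * m x j))
    (m' : Fin N → Fin N → ℝ)
    (hdiag : ∀ x, m' x x = 0)
    (hm : ∀ x y, x ≠ y →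
      ((∑ i ∈ G.neighborFinset x, PB G x i) + (∑ j ∈ G.neighborFinset y, PB G y j))
          * m' x y
        = 1 + (∑ i ∈ G.neighborFinset x, PB G x i * m' i y)
            + (∑ j ∈ G.neighborFinset y, PB G y j * m' x j)) :
    ∀ x y, m x y ≤
      2 * Finset.univ.sup' ⟨(x, y), Finset.mem_univ _⟩
        (fun p : Fin N × Fin N => m' p.1 p.2) := by
  intro x y
  have hL : ∀ a b, a ≠ b → pairGenerator G (m - m') a b = -(PB G a b * m a b) := by
    intro a b hab
    rw [pairGenerator_sub, pairGenerator_eq_of_paired hdiagX hmX hab,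
      pairGenerator_eq_of_modified hm hab]
    ring
  have : Nonempty (Fin N × Fin N) := ⟨(x, y)⟩
  obtain ⟨⟨a, b⟩, hmax⟩ := Finite.exists_max fun p : Fin N × Fin N ↦ (m - m') p.1 p.2
  obtain ⟨x', y', hle⟩ := exists_le_of_isMax hconn hdiagX hdiag hL fun x y ↦ hmax (x, y)
  have hsup : ∀ u v, m' u v ≤ Finset.univ.sup' ⟨(x, y), Finset.mem_univ _⟩
      (fun p : Fin N × Fin N => m' p.1 p.2) :=
    fun u v ↦ Finset.le_sup' (fun p : Fin N × Fin N => m' p.1 p.2) (Finset.mem_univ (u, v))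
  have hxy := hmax (x, y)
  simp only [Pi.sub_apply] at hxy hle
  linarith [hsup x y, hsup x' y']

/-- Claim 2 in the proof of Lemma 4: for a connected simple graph on
`N ≥ 2` vertices, if `m` is a meeting-time solution for the paired process `X` and
`m'` is a meeting-time solution for the modified paired process `X'`, then
`max_{x,y} m x y ≤ 2 · max_{x,y} m' x y`. -/
theorem meeting_time_le_two_modified {N : ℕ} (hN : 2 ≤ N)
    (G : SimpleGraph (Fin N)) [DecidableRel G.Adj] (hconn : G.Connected)
    (m : Fin N → Fin N → ℝ)
    (hsymX : ∀ x y, m x y = m y x) (hdiagX : ∀ x, m x x = 0)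
    (hmX : ∀ x y, x ≠ y →
      ((∑ i ∈ G.neighborFinset x, PB G x i) + (∑ j ∈ G.neighborFinset y, PB G y j)
          - PB G x y) * m x y
        = 1 + (∑ i ∈ (G.neighborFinset x).erase y, PB G x i * m i y)
            + (∑ j ∈ (G.neighborFinset y).erase x, PB G y j * m x j))
    (m' : Fin N → Fin N → ℝ)
    (hsym : ∀ x y, m' x y = m' y x) (hdiag : ∀ x, m' x x = 0)
    (hm : ∀ x y, x ≠ y →
      ((∑ i ∈ G.neighborFinset x, PB G x i) + (∑ j ∈ G.neighborFinset y, PB G y j))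
          * m' x y
        = 1 + (∑ i ∈ G.neighborFinset x, PB G x i * m' i y)
            + (∑ j ∈ G.neighborFinset y, PB G y j * m' x j)) :
    ∀ x y, m x y ≤
      2 * Finset.univ.sup' ⟨(x, y), Finset.mem_univ _⟩
        (fun p : Fin N × Fin N => m' p.1 p.2) :=
  meeting_time_le_two_modified_general G hconn m hdiagX hmX m' hdiag hm
end
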